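/- Let q ≥ 1, Γ ∈ 𝓕_i(a_1,…,a_q; b_1,…,b_q), and suppose no edge of Γ begins at a_q − 1. Let L_2(Γ) be the graph obtained from Γ by adding the edge (a_q − 1, a_q). Then L_2(Γ) ∈ 𝓕_i(a_1,…,a_{q−1}, a_q − 1; b_1,…,b_q) and sgn_i(L_2(Γ)) = −sgn_i(Γ). -/

import Mathlib

open Finset

/-- A "flow graph" is a finite set of directed edges with integer vertices. -/
abbrev FlowGraph : Type := Finset (ℤ × ℤ)

/-- The edges of `E` beginning at `r`. -/
def beginsAt (E : FlowGraph) (r : ℤ) : Finset (ℤ × ℤ) := E.filter (fun e => e.1 = r)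

/-- The edges of `E` ending at `r`. -/
def endsAt (E : FlowGraph) (r : ℤ) : Finset (ℤ × ℤ) := E.filter (fun e => e.2 = r)

/-- `E` is a flow with set of sources `A` and set of sinks `B`:
every edge `(s,t)` has `s < t`; the sources and sinks are pairwise distinct;
exactly one edge begins at each source (and none ends there); exactly one edge
ends at each sink (and none begins there); and every other vertex either meets
no edge, or exactly one edge ends at it and exactly one edge begins at it
(such a vertex is a transit point). -/
structure IsFlow (E : FlowGraph) (A B : Finset ℤ) : Prop where
  edge_lt : ∀ e ∈ E, e.1 < e.2
  disjAB : Disjoint A B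
  source_out : ∀ a ∈ A, (beginsAt E a).card = 1
  source_in : ∀ a ∈ A, endsAt E a = ∅
  sink_in : ∀ b ∈ B, (endsAt E b).card = 1
  sink_out : ∀ b ∈ B, beginsAt E b = ∅
  transit : ∀ r : ℤ, r ∉ A → r ∉ B →
      (beginsAt E r = ∅ ∧ endsAt E r = ∅) ∨
      ((beginsAt E r).card = 1 ∧ (endsAt E r).card = 1)

/-- The set of transit points of the flow `E` with sources `A` and sinks `B`:
the vertices meeting some edge which are neither sources nor sinks. -/
def transitSet (E : FlowGraph) (A B : Finset ℤ) : Finset ℤ :=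
  ((E.image Prod.fst) ∪ (E.image Prod.snd)) \ (A ∪ B)

def IsTransitPoint (E : FlowGraph) (A B : Finset ℤ) (r : ℤ) : Prop :=
  r ∈ transitSet E A B

/-- Two vertices are linked if they lie in the same connected component of `E`. -/
def Linked (E : FlowGraph) (x y : ℤ) : Prop :=
  Relation.ReflTransGen (fun u v => (u, v) ∈ E ∨ (v, u) ∈ E) x y

/-- The finset of values of a family of integers. -/
def srcSet {q : ℕ} (a : Fin q → ℤ) : Finset ℤ := Finset.image a Finset.univ

/-- Membership in `𝓕_i(a_1,…,a_q; b_1,…,b_q)` : a flow with sources the `a j`,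
sinks the `b j`, and no transit point greater than `i`. -/
def InF {q : ℕ} (i : ℤ) (a b : Fin q → ℤ) (E : FlowGraph) : Prop :=
  IsFlow E (srcSet a) (srcSet b) ∧
  ∀ r : ℤ, IsTransitPoint E (srcSet a) (srcSet b) r → r ≤ i

/-- `σ` is the linking permutation: the source `a j` is linked to the sink `b (σ j)`. -/
def IsLinkingPerm {q : ℕ} (E : FlowGraph) (a b : Fin q → ℤ) (σ : Equiv.Perm (Fin q)) : Prop :=
  ∀ j : Fin q, Linked E (a j) (b (σ j))

/-- The `i`-sign of a flow `E` (with sources `A`, sinks given by the family `b` and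
sinks-set `B`), computed from a linking permutation `σ`:
`sgn σ * (-1) ^ (Σ_j (b_j - i) + #transit points)`. -/
def signValue {q : ℕ} (i : ℤ) (b : Fin q → ℤ) (σ : Equiv.Perm (Fin q))
    (E : FlowGraph) (A B : Finset ℤ) : ℤ :=
  (Equiv.Perm.sign σ : ℤ) *
    (-1) ^ ((∑ j : Fin q, (b j - i)).toNat + (transitSet E A B).card)

/-! Since `a_q - 1` meets no edge of Γ, adding the edge `(a_q - 1, a_q)` makes `a_q - 1` a source
and `a_q` a transit point and changes nothing else, so the number of transit points grows by one.
The linking permutation is unchanged: in a flow every vertex has at most one outgoing edge, so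
whether a given sink is reachable by a directed path is constant on connected components, and
two sinks linked to the same source must coincide. -/

def Reach (E : FlowGraph) (x y : ℤ) : Prop :=
  Relation.ReflTransGen (fun u v => (u, v) ∈ E) x y

lemma mem_beginsAt {E : FlowGraph} {r : ℤ} {e : ℤ × ℤ} : e ∈ beginsAt E r ↔ e ∈ E ∧ e.1 = r :=
  mem_filter

lemma mem_endsAt {E : FlowGraph} {r : ℤ} {e : ℤ × ℤ} : e ∈ endsAt E r ↔ e ∈ E ∧ e.2 = r :=
  mem_filter

lemma beginsAt_insert (E : FlowGraph) (e : ℤ × ℤ) (r : ℤ) :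
    beginsAt (insert e E) r = if e.1 = r then insert e (beginsAt E r) else beginsAt E r :=
  filter_insert _ _ _

lemma endsAt_insert (E : FlowGraph) (e : ℤ × ℤ) (r : ℤ) :
    endsAt (insert e E) r = if e.2 = r then insert e (endsAt E r) else endsAt E r :=
  filter_insert _ _ _

lemma srcSet_update {q : ℕ} {a : Fin q → ℤ} (ha : Function.Injective a) (k : Fin q) (x : ℤ) :
    srcSet (Function.update a k x) = insert x ((srcSet a).erase (a k)) := by
  ext y
  simp only [srcSet, mem_image, mem_univ, true_and, mem_insert, mem_erase]
  constructor
  · rintro ⟨j, rfl⟩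
    by_cases hj : j = k
    · simp [hj]
    · simp [Function.update_of_ne hj, ha.ne hj]
  · rintro (rfl | ⟨hy, j, rfl⟩)
    · exact ⟨k, Function.update_self _ _ _⟩
    · exact ⟨j, Function.update_of_ne (fun hjk => hy (congrArg a hjk)) _ _⟩

namespace IsFlow

variable {E : FlowGraph} {A B : Finset ℤ}

lemma card_beginsAt_le_one (h : IsFlow E A B) (r : ℤ) : (beginsAt E r).card ≤ 1 := by
  by_cases hA : r ∈ A
  · exact (h.source_out r hA).le
  by_cases hB : r ∈ B
  · simp [h.sink_out r hB]
  rcases h.transit r hA hB with ⟨hr, -⟩ | ⟨hr, -⟩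
  · simp [hr]
  · exact hr.le

lemma eq_of_mem_of_mem (h : IsFlow E A B) {u v w : ℤ} (hv : (u, v) ∈ E) (hw : (u, w) ∈ E) :
    v = w :=
  congrArg Prod.snd <| card_le_one.1 (h.card_beginsAt_le_one u) _
    (mem_beginsAt.2 ⟨hv, rfl⟩) _ (mem_beginsAt.2 ⟨hw, rfl⟩)

lemma notMem_of_mem_sinks (h : IsFlow E A B) {s t : ℤ} (hs : s ∈ B) : (s, t) ∉ E := fun hst => by
  simpa [h.sink_out s hs] using mem_beginsAt.2 ⟨hst, rfl⟩

lemma exists_edge_of_mem_sources (h : IsFlow E A B) {r : ℤ} (hr : r ∈ A) : ∃ e ∈ E, e.1 = r := by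
  obtain ⟨e, he⟩ := card_pos.1 (h.source_out r hr ▸ Nat.one_pos)
  exact ⟨e, mem_beginsAt.1 he⟩

lemma endsAt_eq_empty (h : IsFlow E A B) {r : ℤ} (hA : r ∉ A) (hB : r ∉ B)
    (hr : beginsAt E r = ∅) : endsAt E r = ∅ := by
  rcases h.transit r hA hB with ⟨-, hend⟩ | ⟨hbeg, -⟩
  · exact hend
  · simp [hr] at hbeg

lemma reach_sink_iff_of_mem (h : IsFlow E A B) {s u v : ℤ} (hs : s ∈ B) (huv : (u, v) ∈ E) :
    Reach E u s ↔ Reach E v s := by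
  refine ⟨fun hus => ?_, Relation.ReflTransGen.head huv⟩
  rcases Relation.ReflTransGen.cases_head hus with rfl | ⟨w, huw, hws⟩
  · exact absurd huv (h.notMem_of_mem_sinks hs)
  · rwa [h.eq_of_mem_of_mem huv huw]

lemma reach_sink_iff_of_linked (h : IsFlow E A B) {s x y : ℤ} (hs : s ∈ B) (hxy : Linked E x y) :
    Reach E x s ↔ Reach E y s := by
  induction hxy with
  | refl => rfl
  | tail _ hyz ih =>
    rcases hyz with hyz | hzy
    · exact ih.trans (h.reach_sink_iff_of_mem hs hyz)
    · exact ih.trans (h.reach_sink_iff_of_mem hs hzy).symm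

lemma eq_of_linked_of_linked (h : IsFlow E A B) {x s t : ℤ} (hs : s ∈ B) (ht : t ∈ B)
    (hxs : Linked E x s) (hxt : Linked E x t) : s = t := by
  have hst : Reach E s t :=
    (h.reach_sink_iff_of_linked ht hxs).1 ((h.reach_sink_iff_of_linked ht hxt).2 .refl)
  rcases Relation.ReflTransGen.cases_head hst with heq | ⟨w, hsw, -⟩
  · exact heq
  · exact absurd hsw (h.notMem_of_mem_sinks hs)

section InsertSourceEdge

variable {p c : ℤ}

lemma insert_source_edge (h : IsFlow E A B) (hc : c ∈ A) (hpA : p ∉ A) (hpB : p ∉ B)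
    (hpc : p < c) (hp : ∀ e ∈ E, e.1 ≠ p) :
    IsFlow (insert (p, c) E) (insert p (A.erase c)) B := by
  have hbeg : beginsAt E p = ∅ := filter_eq_empty_iff.2 hp
  have hend : endsAt E p = ∅ := h.endsAt_eq_empty hpA hpB hbeg
  have hcB : c ∉ B := disjoint_left.1 h.disjAB hc
  have hcp : c ≠ p := hpc.ne'
  refine ⟨?_, ?_, ?_, ?_, ?_, ?_, ?_⟩
  · simpa [hpc] using h.edge_lt
  · simpa [hpB] using disjoint_of_subset_left (erase_subset c A) h.disjAB
  · intro r hr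
    rcases mem_insert.1 hr with rfl | hr
    · simp [beginsAt_insert, hbeg]
    · obtain ⟨hrc, hrA⟩ := mem_erase.1 hr
      simpa [beginsAt_insert, ne_of_mem_of_not_mem hrA hpA |>.symm] using h.source_out r hrA
  · intro r hr
    rcases mem_insert.1 hr with rfl | hr
    · simp [endsAt_insert, hcp, hend]
    · obtain ⟨hrc, hrA⟩ := mem_erase.1 hr
      simpa [endsAt_insert, Ne.symm hrc] using h.source_in r hrA
  · intro r hr
    simpa [endsAt_insert, ne_of_mem_of_not_mem hr hcB |>.symm] using h.sink_in r hr
  · intro r hr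
    simpa [beginsAt_insert, ne_of_mem_of_not_mem hr hpB |>.symm] using h.sink_out r hr
  · intro r hrA hrB
    simp only [mem_insert, mem_erase, not_or, not_and_or, not_not] at hrA
    obtain ⟨hrp, hrc | hrA⟩ := hrA
    · subst hrc
      right
      simp [beginsAt_insert, endsAt_insert, hpc.ne, h.source_in r hc, h.source_out r hc]
    · simpa [beginsAt_insert, endsAt_insert, Ne.symm hrp, ne_of_mem_of_not_mem hc hrA]
        using h.transit r hrA hrB

lemma transitSet_insert_source_edge (h : IsFlow E A B) (hc : c ∈ A) (hpA : p ∉ A) (hpB : p ∉ B)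
    (hpc : p ≠ c) (hp : ∀ e ∈ E, e.1 ≠ p) :
    transitSet (insert (p, c) E) (insert p (A.erase c)) B = insert c (transitSet E A B) := by
  have hend : ∀ e ∈ E, e.2 ≠ p := fun e he hep => by
    simpa [h.endsAt_eq_empty hpA hpB (filter_eq_empty_iff.2 hp)] using mem_endsAt.2 ⟨he, hep⟩
  have hcB : c ∉ B := disjoint_left.1 h.disjAB hc
  ext r
  simp only [transitSet, image_insert, mem_sdiff, mem_union, mem_insert, mem_erase, mem_image]
  by_cases hrp : r = p
  · subst hrp
    simp only [hpc, hpA, hpB, true_or, not_true_eq_false, and_false, false_or,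
      not_false_eq_true, and_true, false_iff]
    rintro (⟨e, he, hep⟩ | ⟨e, he, hep⟩)
    exacts [hp e he hep, hend e he hep]
  by_cases hrc : r = c
  · subst hrc
    simp [hc, hcB, hpc.symm]
  · simp only [hrp, hrc, false_or, Ne, not_false_eq_true, true_and]

end InsertSourceEdge

end IsFlow

lemma notMem_transitSet_of_mem_sources {E : FlowGraph} {A B : Finset ℤ} {c : ℤ} (hc : c ∈ A) :
    c ∉ transitSet E A B :=
  fun hT => (mem_sdiff.1 hT).2 (mem_union_left _ hc)

lemma IsLinkingPerm.eq_of_isFlow {q : ℕ} {E : FlowGraph} {A : Finset ℤ} {a b : Fin q → ℤ}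
    {σ τ : Equiv.Perm (Fin q)} (hE : IsFlow E A (srcSet b)) (hb : Function.Injective b)
    (hσ : IsLinkingPerm E a b σ) (hτ : IsLinkingPerm E a b τ) : σ = τ :=
  Equiv.ext fun j => hb <| hE.eq_of_linked_of_linked (mem_image_of_mem b (mem_univ _))
    (mem_image_of_mem b (mem_univ _)) (hσ j) (hτ j)

lemma IsLinkingPerm.insert_update {q : ℕ} {E : FlowGraph} {a b : Fin q → ℤ}
    {σ : Equiv.Perm (Fin q)} (hσ : IsLinkingPerm E a b σ) (k : Fin q) (p : ℤ) :
    IsLinkingPerm (insert (p, a k) E) (Function.update a k p) b σ := by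
  have hmono : ∀ x y, Linked E x y → Linked (insert (p, a k) E) x y :=
    Relation.ReflTransGen.mono fun _ _ => Or.imp (mem_insert_of_mem ·) (mem_insert_of_mem ·)
  intro j
  by_cases hj : j = k
  · subst hj
    rw [Function.update_self]
    exact Relation.ReflTransGen.head (Or.inl (mem_insert_self _ _)) (hmono _ _ (hσ j))
  · rw [Function.update_of_ne hj]
    exact hmono _ _ (hσ j)

lemma signValue_eq_neg_of_transitSet_eq_insert {q : ℕ} (i : ℤ) (b : Fin q → ℤ)
    (σ : Equiv.Perm (Fin q)) {E E' : FlowGraph} {A A' B : Finset ℤ} {c : ℤ}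
    (hc : c ∉ transitSet E A B) (hT : transitSet E' A' B = insert c (transitSet E A B)) :
    signValue i b σ E' A' B = - signValue i b σ E A B := by
  rw [signValue, signValue, hT, card_insert_of_notMem hc, ← add_assoc, pow_succ]
  ring

/-- Lemma 13: if no edge of `Γ ∈ 𝓕_i(a_1,…,a_q; b_1,…,b_q)` begins at `a_q - 1`,
then `L_2(Γ)` (adding the edge `(a_q - 1, a_q)`) belongs to
`𝓕_i(a_1,…,a_{q-1}, a_q - 1; b_1,…,b_q)` and has `i`-sign opposite to that of `Γ`. -/
theorem statement2 {q : ℕ} (i : ℤ) (a b : Fin (q + 1) → ℤ)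
    (ha : StrictMono a) (hb : StrictAnti b)
    (hai : ∀ j, a j ≤ i) (hbi : ∀ j, i < b j)
    (E : FlowGraph) (hE : InF i a b E)
    (hno : ∀ e ∈ E, e.1 ≠ a (Fin.last q) - 1) :
    InF i (Function.update a (Fin.last q) (a (Fin.last q) - 1)) b
      (insert (a (Fin.last q) - 1, a (Fin.last q)) E) ∧
    ∀ σ τ : Equiv.Perm (Fin (q + 1)),
      IsLinkingPerm E a b σ →
      IsLinkingPerm (insert (a (Fin.last q) - 1, a (Fin.last q)) E)
        (Function.update a (Fin.last q) (a (Fin.last q) - 1)) b τ →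
      signValue i b τ (insert (a (Fin.last q) - 1, a (Fin.last q)) E)
          (srcSet (Function.update a (Fin.last q) (a (Fin.last q) - 1))) (srcSet b)
        = - signValue i b σ E (srcSet a) (srcSet b) := by
  obtain ⟨hflow, hle⟩ := hE
  have hαA : a (Fin.last q) ∈ srcSet a := mem_image_of_mem a (mem_univ _)
  have hpA : a (Fin.last q) - 1 ∉ srcSet a := fun hp => by
    obtain ⟨e, he, he1⟩ := hflow.exists_edge_of_mem_sources hp
    exact hno e he he1
  have hpB : a (Fin.last q) - 1 ∉ srcSet b := by
    simp only [srcSet, mem_image, mem_univ, true_and, not_exists]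
    intro j hj
    linarith [hai (Fin.last q), hbi j]
  have hflow' := hflow.insert_source_edge hαA hpA hpB (by omega) hno
  have hT := hflow.transitSet_insert_source_edge hαA hpA hpB (by omega) hno
  rw [← srcSet_update ha.injective] at hflow' hT
  refine ⟨⟨hflow', fun r hr => ?_⟩, fun σ τ hσ hτ => ?_⟩
  · rw [IsTransitPoint, hT, mem_insert] at hr
    rcases hr with rfl | hr
    exacts [hai _, hle r hr]
  · obtain rfl := (hσ.insert_update _ _).eq_of_isFlow hflow' hb.injective hτ
    exact signValue_eq_neg_of_transitSet_eq_insert i b _ (notMem_transitSet_of_mem_sources hαA) hT
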